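/- arXiv:0704.3843 — 2 statements merged into one kernel-verified Lean document; each statement's English description precedes it below -/
import Mathlib

section
/- Let G be a finite multigraph on n vertices. G is (k,0)-tight (that is, G has exactly kn edges and every vertex subset V' spans at most k|V'| edges) if and only if the bipartite graph B_k(G), whose vertex classes are the edge set E of G and k disjoint copies of V, with each edge-vertex e joined to the k copies of each of its endpoints, contains a perfect matching saturating E. -/
open scoped Classical

noncomputable section

/- We model a finite multigraph as a vertex type `V`, an edge (index) type `E`,
and an endpoint map `ends : E → Sym2 V`; loops are edges whose endpoints form a
diagonal unordered pair.  A (sub)graph is given by a `Finset` of edge indices. -/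

variable {V E : Type*}

/-- The edges of `F` all of whose endpoints lie in `S`. -/
def spanned (ends : E → Sym2 V) (F : Finset E) (S : Finset V) : Finset E :=
  F.filter (fun e => ∀ v ∈ ends e, v ∈ S)

/-- `(k,l)`-sparsity: every nonempty vertex subset `S` spans at most `k|S| - l` edges. -/
def Sparse (ends : E → Sym2 V) (F : Finset E) (k l : ℕ) : Prop :=
  ∀ S : Finset V, S.Nonempty → (spanned ends F S).card + l ≤ k * S.card

/-- The edge set `P` is a map (spanning the whole vertex set): it admits an
orientation (choice of a tail vertex among the endpoints of each edge) with
out-degree exactly `1` at every vertex. -/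
def IsMapOn (ends : E → Sym2 V) (P : Finset E) : Prop :=
  ∃ tail : E → V, (∀ e ∈ P, tail e ∈ ends e) ∧
    ∀ v : V, (P.filter (fun e => tail e = v)).card = 1

/-- The edge set `F` decomposes into `k` edge-disjoint maps. -/
def IsKMap (ends : E → Sym2 V) (F : Finset E) (k : ℕ) : Prop :=
  ∃ col : E → Fin k, ∀ i : Fin k, IsMapOn ends (F.filter (fun e => col e = i))

/-- Underlying simple graph of the edge set `F` (loops and multiplicities dropped). -/
def underGraph (ends : E → Sym2 V) (F : Finset E) : SimpleGraph V :=
  SimpleGraph.fromRel (fun u w => ∃ e ∈ F, ends e = s(u, w))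

/-- `P` is a spanning pseudoforest: within each connected component, the number
of edges is at most the number of vertices (i.e. at most one cycle per component). -/
def IsPseudoforest [Fintype V] (ends : E → Sym2 V) (P : Finset E) : Prop :=
  ∀ v : V,
    (P.filter (fun e => ∀ u ∈ ends e,
        (underGraph ends P).connectedComponentMk u =
          (underGraph ends P).connectedComponentMk v)).card ≤
      (Finset.univ.filter (fun u : V =>
        (underGraph ends P).connectedComponentMk u =
          (underGraph ends P).connectedComponentMk v)).card

/-- `P` is a spanning tree: connected underlying graph with `n - 1` edges
(counted with multiplicity). -/
def IsSpanningTree [Fintype V] (ends : E → Sym2 V) (P : Finset E) : Prop :=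
  (underGraph ends P).Connected ∧ P.card + 1 = Fintype.card V

/-- Edge type of `K_n^{k,2k}`: `2k` parallel edges between each pair of distinct
vertices and `k` loops at each vertex. -/
abbrev KEdge (V : Type*) (k : ℕ) := {p : Sym2 V × Fin (2 * k) // p.1.IsDiag → (p.2 : ℕ) < k}

/-- Endpoints of an edge of `K_n^{k,2k}`. -/
def kends {V : Type*} {k : ℕ} : KEdge V k → Sym2 V := fun p => p.1.1

theorem mem_spanned {ends : E → Sym2 V} {F : Finset E} {S : Finset V} {e : E} :
    e ∈ spanned ends F S ↔ e ∈ F ∧ ∀ v ∈ ends e, v ∈ S :=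
  Finset.mem_filter

theorem spanned_empty (ends : E → Sym2 V) (F : Finset E) : spanned ends F ∅ = ∅ :=
  Finset.filter_false_of_mem fun e _ h => Finset.notMem_empty _ (h _ (Sym2.out_fst_mem (ends e)))

theorem Sparse.card_spanned_le {ends : E → Sym2 V} {F : Finset E} {k : ℕ}
    (h : Sparse ends F k 0) (S : Finset V) : (spanned ends F S).card ≤ k * S.card := by
  rcases S.eq_empty_or_nonempty with rfl | hS
  · simp [spanned_empty]
  · simpa using h S hS

theorem sparse_of_injective {k : ℕ} {ends : E → Sym2 V} {M : E → V × Fin k}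
    (hinj : Function.Injective M) (hM : ∀ e, (M e).1 ∈ ends e) (F : Finset E) :
    Sparse ends F k 0 := by
  intro S _
  have hmaps : ∀ e ∈ spanned ends F S, M e ∈ S ×ˢ (Finset.univ : Finset (Fin k)) :=
    fun e he => Finset.mem_product.mpr ⟨(mem_spanned.mp he).2 _ (hM e), Finset.mem_univ _⟩
  simpa [Finset.card_product, Nat.mul_comm] using Finset.card_le_card_of_injOn M hmaps hinj.injOn

section Incidence

variable [Fintype V] {k : ℕ} {ends : E → Sym2 V}

/-- The neighbourhood of the edge-vertex `e` in `B_k(G)`. -/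
def copiesOfEnds (ends : E → Sym2 V) (k : ℕ) (e : E) : Finset (V × Fin k) :=
  Finset.univ.filter fun p => p.1 ∈ ends e

def endpoints (ends : E → Sym2 V) (A : Finset E) : Finset V :=
  Finset.univ.filter fun v => ∃ e ∈ A, v ∈ ends e

theorem biUnion_copiesOfEnds (A : Finset E) :
    A.biUnion (copiesOfEnds ends k) = endpoints ends A ×ˢ Finset.univ := by
  ext p
  simp [copiesOfEnds, endpoints]

theorem subset_spanned_endpoints [Fintype E] (A : Finset E) :
    A ⊆ spanned ends Finset.univ (endpoints ends A) := fun e he =>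
  mem_spanned.mpr ⟨Finset.mem_univ e, fun v hv => by simpa [endpoints] using ⟨e, he, hv⟩⟩

/-- Hall's condition for `B_k(G)`: the neighbourhood of a set `A` of edge-vertices consists of
the `k` copies of the endpoints of `A`, and `A` is spanned by those endpoints. -/
theorem card_le_card_biUnion_copiesOfEnds [Fintype E] (h : Sparse ends Finset.univ k 0)
    (A : Finset E) :
    A.card ≤ (A.biUnion (copiesOfEnds ends k)).card :=
  calc A.card ≤ (spanned ends Finset.univ (endpoints ends A)).card :=
        Finset.card_le_card (subset_spanned_endpoints A)
    _ ≤ k * (endpoints ends A).card := h.card_spanned_le _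
    _ = (A.biUnion (copiesOfEnds ends k)).card := by
        rw [biUnion_copiesOfEnds, Finset.card_product, Finset.card_univ, Fintype.card_fin,
          Nat.mul_comm]

theorem Sparse.exists_injective [Fintype E] (h : Sparse ends Finset.univ k 0) :
    ∃ M : E → V × Fin k, Function.Injective M ∧ ∀ e, (M e).1 ∈ ends e := by
  obtain ⟨M, hinj, hM⟩ := (Finset.all_card_le_biUnion_card_iff_exists_injective
    (copiesOfEnds ends k)).mp (card_le_card_biUnion_copiesOfEnds h)
  exact ⟨M, hinj, fun e => (Finset.mem_filter.mp (hM e)).2⟩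

end Incidence

/-- A perfect matching of `B_k(G)` saturating `E` is encoded as a bijection
`M : E → V × Fin k` sending each edge to a copy of one of its endpoints. -/
theorem stmt2 [Fintype V] [Fintype E] (k : ℕ) (ends : E → Sym2 V) :
    (Fintype.card E = k * Fintype.card V ∧ Sparse ends Finset.univ k 0) ↔
      ∃ M : E → V × Fin k, Function.Bijective M ∧ ∀ e : E, (M e).1 ∈ ends e := by
  have hcard_iff : Fintype.card E = k * Fintype.card V ↔
      Fintype.card E = Fintype.card (V × Fin k) := by
    rw [Fintype.card_prod, Fintype.card_fin, Nat.mul_comm]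
  constructor
  · rintro ⟨hcard, hsparse⟩
    obtain ⟨M, hinj, hM⟩ := hsparse.exists_injective
    exact ⟨M, (Fintype.bijective_iff_injective_and_card M).mpr ⟨hinj, hcard_iff.mp hcard⟩,
      hM⟩
  · rintro ⟨M, hbij, hM⟩
    exact ⟨hcard_iff.mpr (Fintype.card_of_bijective hbij), sparse_of_injective hbij.1 hM _⟩
end
end

section
/- Let 0 ≤ ℓ ≤ 2k-1 and let G = (V,E) be a finite multigraph on n vertices with exactly kn - ℓ edges. Then G is (k,0)-sparse if and only if there exists a set of ℓ edges whose addition to G yields a graph that decomposes into k edge-disjoint maps. -/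
open scoped Classical

noncomputable section

/- We model a finite multigraph as a vertex type `V`, an edge (index) type `E`,
and an endpoint map `ends : E → Sym2 V`; loops are edges whose endpoints form a
diagonal unordered pair.  A (sub)graph is given by a `Finset` of edge indices. -/

variable {V E : Type*}

/-
By Hall's theorem, `(k,0)`-sparsity is exactly the condition for an injective
assignment of every edge to one of `k` copies of one of its endpoints. Counting shows that
precisely `l` slots `(v, i) ∈ V × Fin k` stay free; filling each with a loop at `v` gives a
bijection between edges and slots, i.e. every vertex is the tail of exactly one edge of each
colour. Conversely each of the `k` maps spans at most `|S|` edges inside any vertex set `S`,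
since each such edge has its tail in `S`.
-/

open Finset

theorem Sparse.exists_injective_incident [Fintype E] {ends : E → Sym2 V} {k : ℕ}
    (hsp : Sparse ends univ k 0) :
    ∃ f : E → V × Fin k, Function.Injective f ∧ ∀ e, (f e).1 ∈ ends e := by
  let slots : E → Finset (V × Fin k) := fun e => (ends e).toFinset ×ˢ univ
  obtain ⟨f, hf, hfe⟩ := (all_card_le_biUnion_card_iff_existsInjective' slots).mp fun s => by
    rcases s.eq_empty_or_nonempty with rfl | hs
    · simp
    set T := s.biUnion fun e => (ends e).toFinset
    have hbiUnion : s.biUnion slots = T ×ˢ univ := by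
      ext ⟨v, i⟩
      simp [slots, T]
    have hspanned : s ⊆ spanned ends univ T := fun e he =>
      mem_filter.mpr ⟨mem_univ e, fun v hv => mem_biUnion.mpr ⟨e, he, Sym2.mem_toFinset.mpr hv⟩⟩
    have hT : T.Nonempty := hs.biUnion fun e _ => ⟨_, Sym2.mem_toFinset.mpr (Sym2.out_fst_mem _)⟩
    calc #s ≤ #(spanned ends univ T) := card_le_card hspanned
      _ ≤ k * #T := by simpa using hsp T hT
      _ = #(s.biUnion slots) := by rw [hbiUnion, card_product, card_univ, Fintype.card_fin, mul_comm]
  exact ⟨f, hf, fun e => (mem_product.mp (hfe e)).1 |> Sym2.mem_toFinset.mp⟩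

theorem Function.Injective.exists_bijective_sum_elim {α β : Type*} [Fintype α] [Fintype β]
    {f : α → β} (hf : Function.Injective f) {l : ℕ} (hcard : Fintype.card α + l = Fintype.card β) :
    ∃ g : Fin l → β, Function.Bijective (Sum.elim f g) := by
  have hcompl : Fintype.card ((Set.range f)ᶜ : Set β) = l := by
    rw [Fintype.card_compl_set, Set.card_range_of_injective hf]
    omega
  let free : Fin l ≃ ((Set.range f)ᶜ : Set β) := Fintype.equivOfCardEq (by simp [hcompl])
  refine ⟨fun i => free i, ?_⟩
  let total : α ⊕ Fin l ≃ β :=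
    ((Equiv.ofInjective f hf).sumCongr free).trans (Equiv.Set.sumCompl (Set.range f))
  convert total.bijective
  ext (a | i) <;> rfl

theorem isKMap_of_bijective {E' : Type*} [Fintype E'] {ends : E' → Sym2 V} {k : ℕ}
    {g : E' → V × Fin k} (hg : Function.Bijective g) (hinc : ∀ x, (g x).1 ∈ ends x) :
    IsKMap ends univ k := by
  refine ⟨fun x => (g x).2, fun i => ⟨fun x => (g x).1, fun x _ => hinc x, fun v => ?_⟩⟩
  obtain ⟨x₀, hx₀⟩ := hg.surjective (v, i)
  rw [filter_filter, card_eq_one]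
  refine ⟨x₀, eq_singleton_iff_unique_mem.mpr ⟨by simp [hx₀], fun x hx => hg.injective ?_⟩⟩
  simp only [mem_filter] at hx
  rw [hx₀]
  exact Prod.ext hx.2.2 hx.2.1

theorem IsMapOn.card_spanned_le {ends : E → Sym2 V} {P : Finset E} (hP : IsMapOn ends P)
    (S : Finset V) : #(spanned ends P S) ≤ #S := by
  obtain ⟨tail, htail, hdeg⟩ := hP
  have htail_mem : ∀ e ∈ spanned ends P S, tail e ∈ S := fun e he => by
    simp only [spanned, mem_filter] at he
    exact he.2 _ (htail e he.1)
  calc #(spanned ends P S) = ∑ v ∈ S, #((spanned ends P S).filter fun e => tail e = v) :=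
        card_eq_sum_card_fiberwise htail_mem
    _ ≤ ∑ _v ∈ S, 1 := sum_le_sum fun v _ =>
        (card_le_card (filter_subset_filter _ (filter_subset _ _))).trans (hdeg v).le
    _ = #S := by simp

theorem IsKMap.sparse {ends : E → Sym2 V} {F : Finset E} {k : ℕ} (hF : IsKMap ends F k) :
    Sparse ends F k 0 := by
  obtain ⟨col, hcol⟩ := hF
  intro S _
  calc #(spanned ends F S) + 0
      = ∑ i : Fin k, #((spanned ends F S).filter fun e => col e = i) := by
        rw [add_zero]
        exact card_eq_sum_card_fiberwise fun e _ => mem_univ (col e)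
    _ = ∑ i : Fin k, #(spanned ends (F.filter fun e => col e = i) S) := by
        simp only [spanned, filter_comm]
    _ ≤ ∑ _i : Fin k, #S := sum_le_sum fun i _ => (hcol i).card_spanned_le S
    _ = k * #S := by simp

theorem Sparse.comp_embedding {E' : Type*} [Fintype E] [Fintype E'] {ends : E' → Sym2 V}
    {k l : ℕ} (hsp : Sparse ends univ k l) (h : E ↪ E') : Sparse (ends ∘ h) univ k l := by
  intro S hS
  refine le_trans (Nat.add_le_add_right ?_ l) (hsp S hS)
  exact card_le_card_of_injOn h (fun e he => by simpa [spanned] using he) h.injective.injOn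

theorem stmt4_general [Fintype V] [Fintype E] (k l : ℕ)
    (ends : E → Sym2 V) (hcard : Fintype.card E + l = k * Fintype.card V) :
    Sparse ends Finset.univ k 0 ↔
      ∃ newEnds : Fin l → Sym2 V,
        IsKMap (Sum.elim ends newEnds) (Finset.univ : Finset (E ⊕ Fin l)) k := by
  constructor
  · intro hsp
    obtain ⟨f, hf, hfe⟩ := hsp.exists_injective_incident
    obtain ⟨g, hg⟩ := hf.exists_bijective_sum_elim (l := l) (by simpa [mul_comm] using hcard)
    refine ⟨fun i => s((g i).1, (g i).1), isKMap_of_bijective hg ?_⟩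
    rintro (e | i)
    · exact hfe e
    · exact Sym2.mem_mk_left _ _
  · rintro ⟨newEnds, hmap⟩
    exact hmap.sparse.comp_embedding .inl

/-- For `G` with `kn - l` edges (`0 ≤ l ≤ 2k-1`): `G` is `(k,0)`-sparse iff some `l`
added edges (arbitrary loops or parallel edges on `V`, modeled by `Fin l → Sym2 V`)
yield a graph decomposing into `k` edge-disjoint maps. -/
theorem stmt4 [Fintype V] [Fintype E] (k l : ℕ) (hl : l ≤ 2 * k - 1)
    (ends : E → Sym2 V) (hcard : Fintype.card E + l = k * Fintype.card V) :
    Sparse ends Finset.univ k 0 ↔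
      ∃ newEnds : Fin l → Sym2 V,
        IsKMap (Sum.elim ends newEnds) (Finset.univ : Finset (E ⊕ Fin l)) k :=
  stmt4_general k l ends hcard
end
end
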